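/- Fix λ ∈ {0,1} and define g_λ(k) := ‖k‖^{−1/2} ε(k,λ). For all k, h ∈ ℝ³ with k ≠ 0, k−h ≠ 0, k_⊥ ≠ 0 and (k−h)_⊥ ≠ 0 one has ‖g_λ(k−h) − g_λ(k)‖ ≤ 4‖h‖/(‖k‖^{1/2}‖k_⊥‖) + (‖h‖/2)(‖k‖^{−3/2} + ‖k−h‖^{−3/2}). -/

import Mathlib

/-! Split `g(k-h) - g(k) = (‖k-h‖^{-1/2} - ‖k‖^{-1/2}) ε(k-h) + ‖k‖^{-1/2} (ε(k-h) - ε(k))`.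
The scalar factor is handled by `|s⁻¹ - t⁻¹| ≤ |s² - t²|/2 · (s⁻³ + t⁻³)` with `s = √a`, `t = √b`.
For the directions, normalisation `v ↦ v/‖v‖` moves by at most `2‖u - v‖/‖v‖` and `k ↦ k_⊥` is a
linear contraction, so `ε(·,0)` moves by at most `2‖h‖/‖k_⊥‖`; the cross product `k̂ × ε(k,0)` of
two unit-bounded factors moves by at most `2‖h‖/‖k‖ + 2‖h‖/‖k_⊥‖ ≤ 4‖h‖/‖k_⊥‖`. -/

noncomputable section

/-- `k_⊥ := (k₂, −k₁, 0)` for `k ∈ ℝ³`. -/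
def perp (k : EuclideanSpace ℝ (Fin 3)) : EuclideanSpace ℝ (Fin 3) :=
  (WithLp.equiv 2 (Fin 3 → ℝ)).symm ![k 1, -(k 0), 0]

/-- The vector cross product on `ℝ³` (as Euclidean space). -/
def cross3 (a b : EuclideanSpace ℝ (Fin 3)) : EuclideanSpace ℝ (Fin 3) :=
  (WithLp.equiv 2 (Fin 3 → ℝ)).symm
    ![a 1 * b 2 - a 2 * b 1, a 2 * b 0 - a 0 * b 2, a 0 * b 1 - a 1 * b 0]

/-- First Coulomb-gauge polarization vector `ε(k,0) := k_⊥ / ‖k_⊥‖`. -/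
def eps0 (k : EuclideanSpace ℝ (Fin 3)) : EuclideanSpace ℝ (Fin 3) :=
  ‖perp k‖⁻¹ • perp k

/-- Second Coulomb-gauge polarization vector `ε(k,1) := (k/‖k‖) × ε(k,0)`. -/
def eps1 (k : EuclideanSpace ℝ (Fin 3)) : EuclideanSpace ℝ (Fin 3) :=
  cross3 (‖k‖⁻¹ • k) (eps0 k)

/-- The polarization vector `ε(k,λ)` for `λ ∈ {0,1}`. -/
def eps (lam : Fin 2) (k : EuclideanSpace ℝ (Fin 3)) : EuclideanSpace ℝ (Fin 3) :=
  if lam = 0 then eps0 k else eps1 k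

/-- The photon form factor `g_λ(k) := ‖k‖^{-1/2} ε(k,λ)`. -/
def gfac (lam : Fin 2) (k : EuclideanSpace ℝ (Fin 3)) : EuclideanSpace ℝ (Fin 3) :=
  (‖k‖ ^ (-(1 : ℝ) / 2)) • eps lam k

section Normalize

variable {E : Type*} [NormedAddCommGroup E] [NormedSpace ℝ E]

lemma norm_inv_norm_smul_le_one (u : E) : ‖‖u‖⁻¹ • u‖ ≤ 1 :=
  mem_closedBall_zero_iff.1 (inv_norm_smul_mem_unitClosedBall u)

lemma norm_smul_sub_smul_le (a b : ℝ) (x y : E) :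
    ‖a • x - b • y‖ ≤ |a - b| * ‖x‖ + |b| * ‖x - y‖ := by
  have h : a • x - b • y = (a - b) • x + b • (x - y) := by rw [sub_smul, smul_sub]; abel
  simpa only [h, norm_smul, Real.norm_eq_abs] using norm_add_le ((a - b) • x) (b • (x - y))

lemma norm_inv_norm_smul_sub_inv_norm_smul_le (u : E) {v : E} (hv : v ≠ 0) :
    ‖‖u‖⁻¹ • u - ‖v‖⁻¹ • v‖ ≤ 2 * ‖u - v‖ / ‖v‖ := by
  have hv₀ : 0 < ‖v‖ := norm_pos_iff.2 hv
  have hu : ‖u‖ • ‖u‖⁻¹ • u = u := by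
    rcases eq_or_ne u 0 with rfl | hu
    · simp
    · rw [smul_smul, mul_inv_cancel₀ (norm_ne_zero_iff.2 hu), one_smul]
  have key : ‖u‖⁻¹ • u - ‖v‖⁻¹ • v = ‖v‖⁻¹ • ((‖v‖ - ‖u‖) • ‖u‖⁻¹ • u + (u - v)) := by
    rw [sub_smul, hu, smul_add, smul_sub, smul_sub, smul_smul, inv_mul_cancel₀ hv₀.ne', one_smul]
    abel
  calc ‖‖u‖⁻¹ • u - ‖v‖⁻¹ • v‖
      ≤ ‖v‖⁻¹ * (|‖v‖ - ‖u‖| * 1 + ‖u - v‖) := by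
        rw [key, norm_smul, norm_inv, norm_norm]
        gcongr
        refine (norm_add_le _ _).trans ?_
        rw [norm_smul, Real.norm_eq_abs]
        gcongr
        exact norm_inv_norm_smul_le_one u
    _ ≤ ‖v‖⁻¹ * (‖u - v‖ * 1 + ‖u - v‖) := by
        gcongr
        rw [abs_sub_comm]
        exact abs_norm_sub_norm_le u v
    _ = 2 * ‖u - v‖ / ‖v‖ := by ring

end Normalize

lemma abs_inv_sub_inv_le {s t : ℝ} (hs : 0 < s) (ht : 0 < t) :
    |s⁻¹ - t⁻¹| ≤ |s ^ 2 - t ^ 2| / 2 * ((t ^ 3)⁻¹ + (s ^ 3)⁻¹) := by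
  have hst : 0 < s * t := mul_pos hs ht
  have h_inv : s⁻¹ - t⁻¹ = (t - s) / (s * t) := by field_simp
  have h_sq : s ^ 2 - t ^ 2 = -((t - s) * (s + t)) := by ring
  rw [h_inv, h_sq, abs_neg, abs_mul, abs_div, abs_of_pos hst, abs_of_pos (add_pos hs ht),
    div_eq_mul_inv, mul_div_assoc, mul_assoc]
  gcongr
  -- `2 s² t² ≤ (s + t)(s³ + t³)` after clearing denominators, by `s⁴ + t⁴ ≥ 2 s² t²`
  rw [inv_le_iff_one_le_mul₀ hst]
  field_simp
  nlinarith [sq_nonneg (s ^ 2 - t ^ 2), mul_pos hst (mul_pos hs ht), mul_pos hst hst,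
    mul_pos (pow_pos hs 3) ht, mul_pos (pow_pos ht 3) hs]

lemma Real.rpow_neg_half_eq_inv_sqrt {a : ℝ} (ha : 0 ≤ a) : a ^ (-(1 : ℝ) / 2) = (√a)⁻¹ := by
  rw [neg_div, Real.rpow_neg ha, Real.sqrt_eq_rpow]

lemma Real.rpow_neg_three_halves_eq_inv_sqrt_pow {a : ℝ} (ha : 0 ≤ a) :
    a ^ (-(3 : ℝ) / 2) = (√a ^ 3)⁻¹ := by
  rw [neg_div, Real.rpow_neg ha, Real.sqrt_eq_rpow, ← Real.rpow_natCast, ← Real.rpow_mul ha]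
  norm_num

lemma abs_rpow_neg_half_sub_le {a b : ℝ} (ha : 0 < a) (hb : 0 < b) :
    |a ^ (-(1 : ℝ) / 2) - b ^ (-(1 : ℝ) / 2)| ≤
      |a - b| / 2 * (b ^ (-(3 : ℝ) / 2) + a ^ (-(3 : ℝ) / 2)) := by
  simp only [Real.rpow_neg_half_eq_inv_sqrt, Real.rpow_neg_three_halves_eq_inv_sqrt_pow, ha.le,
    hb.le]
  simpa only [Real.sq_sqrt, ha.le, hb.le] using
    abs_inv_sub_inv_le (Real.sqrt_pos.2 ha) (Real.sqrt_pos.2 hb)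

section PhotonPolarization

lemma norm_sq_eq_fin_three (x : EuclideanSpace ℝ (Fin 3)) :
    ‖x‖ ^ 2 = x 0 ^ 2 + x 1 ^ 2 + x 2 ^ 2 := by
  simp [EuclideanSpace.norm_sq_eq, Fin.sum_univ_three]

lemma perp_sub (k h : EuclideanSpace ℝ (Fin 3)) : perp (k - h) = perp k - perp h := by
  ext i; fin_cases i <;> simp [perp]; ring

lemma norm_perp_le (k : EuclideanSpace ℝ (Fin 3)) : ‖perp k‖ ≤ ‖k‖ := by
  rw [← pow_le_pow_iff_left₀ (norm_nonneg _) (norm_nonneg _) two_ne_zero, norm_sq_eq_fin_three,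
    norm_sq_eq_fin_three]
  simp [perp]
  nlinarith [sq_nonneg (k 2)]

lemma cross3_sub_cross3 (a a' b b' : EuclideanSpace ℝ (Fin 3)) :
    cross3 a' b' - cross3 a b = cross3 (a' - a) b' + cross3 a (b' - b) := by
  ext i; fin_cases i <;> simp [cross3] <;> ring

lemma norm_cross3_le (a b : EuclideanSpace ℝ (Fin 3)) : ‖cross3 a b‖ ≤ ‖a‖ * ‖b‖ := by
  rw [← pow_le_pow_iff_left₀ (norm_nonneg _) (by positivity) two_ne_zero, mul_pow,
    norm_sq_eq_fin_three, norm_sq_eq_fin_three, norm_sq_eq_fin_three]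
  simp [cross3]
  -- Lagrange's identity: `‖a × b‖² = ‖a‖²‖b‖² - ⟪a, b⟫²`
  nlinarith [sq_nonneg (a 0 * b 0 + a 1 * b 1 + a 2 * b 2)]

lemma norm_eps0_le_one (k : EuclideanSpace ℝ (Fin 3)) : ‖eps0 k‖ ≤ 1 :=
  norm_inv_norm_smul_le_one _

lemma norm_eps_le_one (lam : Fin 2) (k : EuclideanSpace ℝ (Fin 3)) : ‖eps lam k‖ ≤ 1 := by
  unfold eps
  split_ifs
  · exact norm_eps0_le_one k
  · calc ‖eps1 k‖ ≤ ‖‖k‖⁻¹ • k‖ * ‖eps0 k‖ := norm_cross3_le _ _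
      _ ≤ 1 * 1 := by
        gcongr
        exacts [norm_inv_norm_smul_le_one k, norm_eps0_le_one k]
      _ = 1 := one_mul 1

variable {k : EuclideanSpace ℝ (Fin 3)} (h : EuclideanSpace ℝ (Fin 3))

lemma norm_eps0_sub_le (hkp : perp k ≠ 0) :
    ‖eps0 (k - h) - eps0 k‖ ≤ 2 * ‖h‖ / ‖perp k‖ := by
  calc ‖eps0 (k - h) - eps0 k‖ ≤ 2 * ‖perp (k - h) - perp k‖ / ‖perp k‖ :=
        norm_inv_norm_smul_sub_inv_norm_smul_le _ hkp
    _ ≤ 2 * ‖h‖ / ‖perp k‖ := by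
      rw [perp_sub, sub_sub_cancel_left, norm_neg]
      gcongr
      exact norm_perp_le h

lemma norm_eps1_sub_le (hkp : perp k ≠ 0) :
    ‖eps1 (k - h) - eps1 k‖ ≤ 4 * ‖h‖ / ‖perp k‖ := by
  have hpk : 0 < ‖perp k‖ := norm_pos_iff.2 hkp
  have hk : k ≠ 0 := norm_pos_iff.1 (hpk.trans_le (norm_perp_le k))
  have h_dir : ‖‖k - h‖⁻¹ • (k - h) - ‖k‖⁻¹ • k‖ ≤ 2 * ‖h‖ / ‖perp k‖ :=
    calc ‖‖k - h‖⁻¹ • (k - h) - ‖k‖⁻¹ • k‖ ≤ 2 * ‖k - h - k‖ / ‖k‖ :=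
          norm_inv_norm_smul_sub_inv_norm_smul_le _ hk
      _ ≤ 2 * ‖h‖ / ‖perp k‖ := by
        rw [sub_sub_cancel_left, norm_neg]
        gcongr
        exact norm_perp_le k
  calc ‖eps1 (k - h) - eps1 k‖
      ≤ ‖‖k - h‖⁻¹ • (k - h) - ‖k‖⁻¹ • k‖ * ‖eps0 (k - h)‖
        + ‖‖k‖⁻¹ • k‖ * ‖eps0 (k - h) - eps0 k‖ := by
        rw [eps1, eps1, cross3_sub_cross3]
        exact (norm_add_le _ _).trans (add_le_add (norm_cross3_le _ _) (norm_cross3_le _ _))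
    _ ≤ 2 * ‖h‖ / ‖perp k‖ * 1 + 1 * (2 * ‖h‖ / ‖perp k‖) := by
        gcongr
        exacts [norm_eps0_le_one _, norm_inv_norm_smul_le_one k, norm_eps0_sub_le h hkp]
    _ = 4 * ‖h‖ / ‖perp k‖ := by ring

lemma norm_eps_sub_le (lam : Fin 2) (hkp : perp k ≠ 0) :
    ‖eps lam (k - h) - eps lam k‖ ≤ 4 * ‖h‖ / ‖perp k‖ := by
  unfold eps
  split_ifs
  · exact (norm_eps0_sub_le h hkp).trans (by gcongr; norm_num)
  · exact norm_eps1_sub_le h hkp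

end PhotonPolarization

theorem stmt7_general (lam : Fin 2) (k h : EuclideanSpace ℝ (Fin 3))
    (hk : k ≠ 0) (hkh : k - h ≠ 0)
    (hkp : perp k ≠ 0) :
    ‖gfac lam (k - h) - gfac lam k‖ ≤
      4 * ‖h‖ / (‖k‖ ^ ((1 : ℝ) / 2) * ‖perp k‖) +
        (‖h‖ / 2) * (‖k‖ ^ (-(3 : ℝ) / 2) + ‖k - h‖ ^ (-(3 : ℝ) / 2)) := by
  have hk₀ : 0 < ‖k‖ := norm_pos_iff.2 hk
  have h_norm : |‖k - h‖ - ‖k‖| ≤ ‖h‖ := by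
    simpa only [sub_sub_cancel_left, norm_neg] using abs_norm_sub_norm_le (k - h) k
  have h_scalar : |‖k - h‖ ^ (-(1 : ℝ) / 2) - ‖k‖ ^ (-(1 : ℝ) / 2)| ≤
      ‖h‖ / 2 * (‖k‖ ^ (-(3 : ℝ) / 2) + ‖k - h‖ ^ (-(3 : ℝ) / 2)) :=
    (abs_rpow_neg_half_sub_le (norm_pos_iff.2 hkh) hk₀).trans (by gcongr)
  calc ‖gfac lam (k - h) - gfac lam k‖
      ≤ |‖k - h‖ ^ (-(1 : ℝ) / 2) - ‖k‖ ^ (-(1 : ℝ) / 2)| * ‖eps lam (k - h)‖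
        + |‖k‖ ^ (-(1 : ℝ) / 2)| * ‖eps lam (k - h) - eps lam k‖ := norm_smul_sub_smul_le _ _ _ _
    _ ≤ ‖h‖ / 2 * (‖k‖ ^ (-(3 : ℝ) / 2) + ‖k - h‖ ^ (-(3 : ℝ) / 2)) * 1
        + |‖k‖ ^ (-(1 : ℝ) / 2)| * (4 * ‖h‖ / ‖perp k‖) :=
      add_le_add (mul_le_mul h_scalar (norm_eps_le_one lam _) (norm_nonneg _) (by positivity))
        (mul_le_mul_of_nonneg_left (norm_eps_sub_le h lam hkp) (abs_nonneg _))
    _ = _ := by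
      have h_inv : ‖k‖ ^ (-(1 : ℝ) / 2) = (‖k‖ ^ ((1 : ℝ) / 2))⁻¹ := by
        rw [neg_div, Real.rpow_neg hk₀.le]
      rw [abs_of_pos (by positivity), h_inv]
      ring

/-- **Discrete derivative bound on the photon form factor** (from the proof of
Proposition 5.5, the photon derivative bound):
`‖g_λ(k−h) − g_λ(k)‖ ≤ 4‖h‖/(‖k‖^{1/2}‖k_⊥‖) + (‖h‖/2)(‖k‖^{-3/2} + ‖k−h‖^{-3/2})`. -/
theorem stmt7 (lam : Fin 2) (k h : EuclideanSpace ℝ (Fin 3))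
    (hk : k ≠ 0) (hkh : k - h ≠ 0)
    (hkp : perp k ≠ 0) (hkhp : perp (k - h) ≠ 0) :
    ‖gfac lam (k - h) - gfac lam k‖ ≤
      4 * ‖h‖ / (‖k‖ ^ ((1 : ℝ) / 2) * ‖perp k‖) +
        (‖h‖ / 2) * (‖k‖ ^ (-(3 : ℝ) / 2) + ‖k - h‖ ^ (-(3 : ℝ) / 2)) :=
  stmt7_general lam k h hk hkh hkp
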